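/- If G is a triangularly simply connected graph, then its clique graph kG is triangularly simply connected. -/

import Mathlib

open SimpleGraph

/-- A maximal clique: a clique not properly contained in any other clique. -/
def IsMaxClique {V : Type*} (G : SimpleGraph V) (s : Set V) : Prop :=
  G.IsClique s ∧ ∀ t : Set V, G.IsClique t → s ⊆ t → t = s

/-- Vertices of the clique graph: the (maximal) cliques of `G`. -/
abbrev CliqueVert {V : Type*} (G : SimpleGraph V) := {s : Set V // IsMaxClique G s}

/-- The clique graph `kG`: cliques of `G`, two distinct cliques adjacent iff they intersect. -/
def cliqueGraph {V : Type*} (G : SimpleGraph V) : SimpleGraph (CliqueVert G) where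
  Adj Q R := Q ≠ R ∧ (Q.1 ∩ R.1).Nonempty
  symm := by
    constructor
    rintro Q R ⟨hne, x, hx1, hx2⟩
    exact ⟨hne.symm, x, hx2, hx1⟩
  loopless := by constructor; rintro Q ⟨hne, -⟩; exact hne rfl

/-- Elementary moves on walks (recorded as lists of vertices): triangle
removal/insertion and dead end removal/insertion. -/
inductive ElemMove {V : Type*} (G : SimpleGraph V) : List V → List V → Prop
  | triRemove (l₁ l₂ : List V) (a b c : V) (h₁ : G.Adj a b) (h₂ : G.Adj b c) (h₃ : G.Adj a c) :
      ElemMove G (l₁ ++ a :: b :: c :: l₂) (l₁ ++ a :: c :: l₂)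
  | triInsert (l₁ l₂ : List V) (a b c : V) (h₁ : G.Adj a b) (h₂ : G.Adj b c) (h₃ : G.Adj a c) :
      ElemMove G (l₁ ++ a :: c :: l₂) (l₁ ++ a :: b :: c :: l₂)
  | deadEndRemove (l₁ l₂ : List V) (a b : V) (h : G.Adj a b) :
      ElemMove G (l₁ ++ a :: b :: a :: l₂) (l₁ ++ a :: l₂)
  | deadEndInsert (l₁ l₂ : List V) (a b : V) (h : G.Adj a b) :
      ElemMove G (l₁ ++ a :: l₂) (l₁ ++ a :: b :: a :: l₂)

/-- Two walks are homotopic if one can be transformed into the other by a finite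
sequence of elementary moves. -/
def Homotopic {V : Type*} (G : SimpleGraph V) : List V → List V → Prop :=
  Relation.ReflTransGen (ElemMove G)

/-- A graph is triangularly simply connected if it is connected and every closed walk
is homotopic to a trivial walk. -/
def TriSimplyConnected {V : Type*} (G : SimpleGraph V) : Prop :=
  G.Connected ∧ ∀ (v : V) (l : List V), (v :: l).Chain' G.Adj →
    (v :: l).getLast (List.cons_ne_nil v l) = v → Homotopic G (v :: l) [v]

/-!
A walk `v₀ v₁ … vₙ` of `G` lifts to the walk `Q v₀, R v₀ v₁, Q v₁, …, Q vₙ` of `kG`, where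
`Q v` and `R u v` are maximal cliques containing `v` and `{u, v}`. Three cliques with a common
vertex span a triangle of `kG` (or fewer vertices), and this makes the lift compatible with
homotopy: along a triangle `abc` of `G`, each of `R a b`, `R b c`, `R a c` can be exchanged for a
maximal clique `T ⊇ {a, b, c}`. Conversely, picking `xᵢ ∈ Cᵢ ∩ Cᵢ₊₁` along a closed walk
`C₀ C₁ … C₀` of `kG` shows that it is homotopic to a step from `C₀` into the lift of a closed
walk of `G` and back, and contracting that walk in `G` contracts the clique walk.

Consecutive cliques of a lift may coincide, so the argument is run for lazy walks, where a
vertex may be repeated; deleting the repetitions (`List.destutter`) turns a lazy homotopy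
between honest walks back into a homotopy.
-/

open Relation

section LazyHomotopy
variable {W : Type*} {H : SimpleGraph W}

lemma ElemMove.symm {l l' : List W} (h : ElemMove H l l') : ElemMove H l' l := by
  cases h with
  | triRemove l₁ l₂ a b c h₁ h₂ h₃ => exact .triInsert l₁ l₂ a b c h₁ h₂ h₃
  | triInsert l₁ l₂ a b c h₁ h₂ h₃ => exact .triRemove l₁ l₂ a b c h₁ h₂ h₃
  | deadEndRemove l₁ l₂ a b h => exact .deadEndInsert l₁ l₂ a b h
  | deadEndInsert l₁ l₂ a b h => exact .deadEndRemove l₁ l₂ a b h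

lemma ElemMove.append_append {l l' : List W} (h : ElemMove H l l') (p s : List W) :
    ElemMove H (p ++ l ++ s) (p ++ l' ++ s) := by
  cases h with
  | triRemove l₁ l₂ a b c h₁ h₂ h₃ =>
    simpa using ElemMove.triRemove (p ++ l₁) (l₂ ++ s) a b c h₁ h₂ h₃
  | triInsert l₁ l₂ a b c h₁ h₂ h₃ =>
    simpa using ElemMove.triInsert (p ++ l₁) (l₂ ++ s) a b c h₁ h₂ h₃
  | deadEndRemove l₁ l₂ a b h => simpa using ElemMove.deadEndRemove (p ++ l₁) (l₂ ++ s) a b h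
  | deadEndInsert l₁ l₂ a b h => simpa using ElemMove.deadEndInsert (p ++ l₁) (l₂ ++ s) a b h

lemma Homotopic.symm {l l' : List W} (h : Homotopic H l l') : Homotopic H l' l := by
  induction h with
  | refl => exact ReflTransGen.refl
  | tail _ h ih => exact ReflTransGen.head h.symm ih

lemma Homotopic.append_left {l l' : List W} (h : Homotopic H l l') (p : List W) :
    Homotopic H (p ++ l) (p ++ l') :=
  ReflTransGen.lift (p ++ ·) (fun _ _ h => by simpa using h.append_append p []) _ _ h

inductive LazyMove (H : SimpleGraph W) : List W → List W → Prop
  | elem {l l' : List W} : ElemMove H l l' → LazyMove H l l'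
  | stutterRemove (l₁ l₂ : List W) (a : W) : LazyMove H (l₁ ++ a :: a :: l₂) (l₁ ++ a :: l₂)
  | stutterInsert (l₁ l₂ : List W) (a : W) : LazyMove H (l₁ ++ a :: l₂) (l₁ ++ a :: a :: l₂)

def LazyHomotopic (H : SimpleGraph W) : List W → List W → Prop :=
  ReflTransGen (LazyMove H)

lemma LazyMove.symm {l l' : List W} (h : LazyMove H l l') : LazyMove H l' l := by
  cases h with
  | elem h => exact .elem h.symm
  | stutterRemove l₁ l₂ a => exact .stutterInsert l₁ l₂ a
  | stutterInsert l₁ l₂ a => exact .stutterRemove l₁ l₂ a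

lemma LazyMove.append_append {l l' : List W} (h : LazyMove H l l') (p s : List W) :
    LazyMove H (p ++ l ++ s) (p ++ l' ++ s) := by
  cases h with
  | elem h => exact .elem (h.append_append p s)
  | stutterRemove l₁ l₂ a => simpa using LazyMove.stutterRemove (H := H) (p ++ l₁) (l₂ ++ s) a
  | stutterInsert l₁ l₂ a => simpa using LazyMove.stutterInsert (H := H) (p ++ l₁) (l₂ ++ s) a

lemma LazyHomotopic.symm {l l' : List W} (h : LazyHomotopic H l l') : LazyHomotopic H l' l := by
  induction h with
  | refl => exact ReflTransGen.refl
  | tail _ h ih => exact ReflTransGen.head h.symm ih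

lemma LazyHomotopic.trans {l l' l'' : List W} (h : LazyHomotopic H l l')
    (h' : LazyHomotopic H l' l'') : LazyHomotopic H l l'' :=
  ReflTransGen.trans h h'

lemma LazyHomotopic.append_left {l l' : List W} (h : LazyHomotopic H l l') (p : List W) :
    LazyHomotopic H (p ++ l) (p ++ l') :=
  ReflTransGen.lift (p ++ ·) (fun _ _ h => by simpa using h.append_append p []) _ _ h

lemma LazyHomotopic.append_right {l l' : List W} (h : LazyHomotopic H l l') (s : List W) :
    LazyHomotopic H (l ++ s) (l' ++ s) :=
  ReflTransGen.lift (· ++ s) (fun _ _ h => by simpa using h.append_append [] s) _ _ h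

lemma LazyHomotopic.triangle {a b c : W} (hab : ReflGen H.Adj a b) (hbc : ReflGen H.Adj b c)
    (hac : ReflGen H.Adj a c) : LazyHomotopic H [a, b, c] [a, c] := by
  rcases hab with _ | hab
  · exact .single (.stutterRemove [] [c] a)
  rcases hbc with _ | hbc
  · exact .single (.stutterRemove [a] [] b)
  rcases hac with _ | hac
  · exact .tail (.single (.elem (.deadEndRemove [] [] a b hab))) (.stutterInsert [] [] a)
  · exact .single (.elem (.triRemove [] [] a b c hab hbc hac))

end LazyHomotopy

namespace List
variable {α : Type*}

lemma exists_destutter'_eq_cons (R : α → α → Prop) [DecidableRel R] (a : α) (l : List α) :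
    ∃ t, l.destutter' R a = a :: t := by
  induction l with
  | nil => exact ⟨[], rfl⟩
  | cons b l ih =>
    by_cases h : R a b
    · exact ⟨_, destutter'_cons_pos l h⟩
    · rwa [destutter'_cons_neg l h]

variable [DecidableEq α]

lemma exists_destutter'_append_cons (l : List α) (a x : α) :
    ∃ P, ∀ m, (l ++ a :: m).destutter' (· ≠ ·) x = P ++ m.destutter' (· ≠ ·) a := by
  induction l generalizing x with
  | nil =>
    by_cases h : x = a
    · exact ⟨[], fun m => by simp [h]⟩
    · exact ⟨[x], fun m => by simp [h]⟩
  | cons y l ih =>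
    by_cases h : x = y
    · obtain ⟨P, hP⟩ := ih x
      exact ⟨P, fun m => by simp [h, ← hP]⟩
    · obtain ⟨P, hP⟩ := ih y
      exact ⟨x :: P, fun m => by simp [h, hP]⟩

lemma exists_destutter_append_cons (l : List α) (a : α) :
    ∃ P, ∀ m, (l ++ a :: m).destutter (· ≠ ·) = P ++ m.destutter' (· ≠ ·) a := by
  cases l with
  | nil => exact ⟨[], fun m => rfl⟩
  | cons y l => exact exists_destutter'_append_cons l a y

end List

section Destutter
variable {W : Type*} [DecidableEq W] {H : SimpleGraph W}

lemma Homotopic.destutter_append_cons {a : W} {m m' : List W}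
    (h : Homotopic H (m.destutter' (· ≠ ·) a) (m'.destutter' (· ≠ ·) a)) (l : List W) :
    Homotopic H ((l ++ a :: m).destutter (· ≠ ·)) ((l ++ a :: m').destutter (· ≠ ·)) := by
  obtain ⟨P, hP⟩ := l.exists_destutter_append_cons a
  rw [hP, hP]
  exact h.append_left P

lemma ElemMove.homotopic_destutter {l l' : List W} (h : ElemMove H l l') :
    Homotopic H (l.destutter (· ≠ ·)) (l'.destutter (· ≠ ·)) := by
  have tri {a b c : W} (l₂ : List W) (h₁ : H.Adj a b) (h₂ : H.Adj b c) (h₃ : H.Adj a c) :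
      Homotopic H ((b :: c :: l₂).destutter' (· ≠ ·) a) ((c :: l₂).destutter' (· ≠ ·) a) := by
    obtain ⟨T, hT⟩ := l₂.exists_destutter'_eq_cons (· ≠ ·) c
    simp only [List.destutter'_cons_pos _ h₁.ne, List.destutter'_cons_pos _ h₂.ne,
      List.destutter'_cons_pos _ h₃.ne, hT]
    exact .single (.triRemove [] T a b c h₁ h₂ h₃)
  have deadEnd {a b : W} (l₂ : List W) (hab : H.Adj a b) :
      Homotopic H ((b :: a :: l₂).destutter' (· ≠ ·) a) (l₂.destutter' (· ≠ ·) a) := by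
    obtain ⟨T, hT⟩ := l₂.exists_destutter'_eq_cons (· ≠ ·) a
    simp only [List.destutter'_cons_pos _ hab.ne, List.destutter'_cons_pos _ hab.symm.ne, hT]
    exact .single (.deadEndRemove [] T a b hab)
  cases h with
  | triRemove l₁ l₂ a b c h₁ h₂ h₃ => exact (tri l₂ h₁ h₂ h₃).destutter_append_cons l₁
  | triInsert l₁ l₂ a b c h₁ h₂ h₃ => exact (tri l₂ h₁ h₂ h₃).symm.destutter_append_cons l₁
  | deadEndRemove l₁ l₂ a b hab => exact (deadEnd l₂ hab).destutter_append_cons l₁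
  | deadEndInsert l₁ l₂ a b hab => exact (deadEnd l₂ hab).symm.destutter_append_cons l₁

lemma LazyMove.homotopic_destutter {l l' : List W} (h : LazyMove H l l') :
    Homotopic H (l.destutter (· ≠ ·)) (l'.destutter (· ≠ ·)) := by
  have stutter (a : W) (l₂ : List W) :
      Homotopic H ((a :: l₂).destutter' (· ≠ ·) a) (l₂.destutter' (· ≠ ·) a) := by
    rw [List.destutter'_cons_neg _ (not_not.2 rfl)]
    exact ReflTransGen.refl
  cases h with
  | elem h => exact h.homotopic_destutter
  | stutterRemove l₁ l₂ a => exact (stutter a l₂).destutter_append_cons l₁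
  | stutterInsert l₁ l₂ a => exact (stutter a l₂).symm.destutter_append_cons l₁

lemma LazyHomotopic.homotopic_destutter {l l' : List W} (h : LazyHomotopic H l l') :
    Homotopic H (l.destutter (· ≠ ·)) (l'.destutter (· ≠ ·)) := by
  induction h with
  | refl => exact ReflTransGen.refl
  | tail _ h ih => exact ih.trans h.homotopic_destutter

end Destutter

section CliqueGraph
variable {V : Type*} {G : SimpleGraph V}

lemma exists_isMaxClique_superset {s : Set V} (hs : G.IsClique s) :
    ∃ t, s ⊆ t ∧ IsMaxClique G t := by
  obtain ⟨m, hsm, hm⟩ := zorn_subset_nonempty {t | G.IsClique t}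
    (fun c hc hchain _ => ⟨⋃₀ c, (Set.pairwise_sUnion hchain.directedOn).2 hc,
      fun _ => Set.subset_sUnion_of_mem⟩) s hs
  exact ⟨m, hsm, hm.prop, fun t ht hmt => (hm.le_of_ge ht hmt).antisymm hmt⟩

lemma IsMaxClique.nonempty [Nonempty V] {s : Set V} (hs : IsMaxClique G s) : s.Nonempty := by
  obtain ⟨v⟩ := ‹Nonempty V›
  by_contra h
  rw [Set.not_nonempty_iff_eq_empty] at h
  subst h
  exact Set.singleton_ne_empty v (hs.2 {v} (isClique_singleton v) (Set.empty_subset _))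

instance (G : SimpleGraph V) : Nonempty (CliqueVert G) :=
  let ⟨t, _, ht⟩ := exists_isMaxClique_superset G.isClique_empty
  ⟨⟨t, ht⟩⟩

/-- A maximal clique containing `s`, or an arbitrary one if `s` is not a clique. -/
noncomputable def cliqueHull (G : SimpleGraph V) (s : Set V) : CliqueVert G :=
  Classical.epsilon fun A => G.IsClique s → s ⊆ A.1

lemma mem_cliqueHull {s : Set V} (hs : G.IsClique s) {x : V} (hx : x ∈ s) :
    x ∈ (cliqueHull G s).1 :=
  Classical.epsilon_spec (p := fun A : CliqueVert G => G.IsClique s → s ⊆ A.1)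
    (let ⟨t, hst, ht⟩ := exists_isMaxClique_superset hs; ⟨⟨t, ht⟩, fun _ => hst⟩) hs hx

lemma mem_cliqueHull_singleton (v : V) : v ∈ (cliqueHull G {v}).1 :=
  mem_cliqueHull (isClique_singleton v) rfl

lemma reflGen_cliqueGraph_adj_of_mem {A B : CliqueVert G} {x : V} (hA : x ∈ A.1) (hB : x ∈ B.1) :
    ReflGen (cliqueGraph G).Adj A B := by
  by_cases h : A = B
  · exact h ▸ ReflGen.refl
  · exact .single ⟨h, x, hA, hB⟩

lemma cliqueGraph_reachable_of_mem {A B : CliqueVert G} {x : V} (hA : x ∈ A.1)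
    (hB : x ∈ B.1) : (cliqueGraph G).Reachable A B := by
  rcases reflGen_cliqueGraph_adj_of_mem hA hB with _ | h
  exacts [.rfl, h.reachable]

lemma cliqueGraph_connected (h : G.Connected) : (cliqueGraph G).Connected := by
  have : Nonempty V := h.nonempty
  have hreach {a b : V} (hab : ReflTransGen G.Adj a b) :
      (cliqueGraph G).Reachable (cliqueHull G {a}) (cliqueHull G {b}) := by
    induction hab with
    | refl => rfl
    | @tail b c _ hbc ih =>
      have hbc' : G.IsClique {b, c} := isClique_pair.2 fun _ => hbc
      exact ih.trans <| (cliqueGraph_reachable_of_mem (mem_cliqueHull_singleton b)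
        (mem_cliqueHull hbc' (by simp))).trans
        (cliqueGraph_reachable_of_mem (mem_cliqueHull hbc' (by simp)) (mem_cliqueHull_singleton c))
  refine .mk fun A B => ?_
  obtain ⟨a, ha⟩ := A.2.nonempty
  obtain ⟨b, hb⟩ := B.2.nonempty
  have hab := hreach ((reachable_iff_reflTransGen a b).1 (h.preconnected a b))
  exact ((cliqueGraph_reachable_of_mem ha (mem_cliqueHull_singleton a)).trans hab).trans
    (cliqueGraph_reachable_of_mem (mem_cliqueHull_singleton b) hb)

lemma LazyHomotopic.cliqueGraph_triangle {A X B : CliqueVert G} {x : V} (hA : x ∈ A.1)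
    (hX : x ∈ X.1) (hB : x ∈ B.1) : LazyHomotopic (cliqueGraph G) [A, X, B] [A, B] :=
  .triangle (reflGen_cliqueGraph_adj_of_mem hA hX) (reflGen_cliqueGraph_adj_of_mem hX hB)
    (reflGen_cliqueGraph_adj_of_mem hA hB)

lemma LazyHomotopic.cliqueGraph_deadEnd {A X : CliqueVert G} {x : V} (hA : x ∈ A.1)
    (hX : x ∈ X.1) : LazyHomotopic (cliqueGraph G) [A, X, A] [A] :=
  (cliqueGraph_triangle hA hX hA).tail (.stutterRemove [] [] A)

lemma LazyHomotopic.cliqueGraph_swap {P X Y S : CliqueVert G} {a b : V} (haP : a ∈ P.1)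
    (haX : a ∈ X.1) (haY : a ∈ Y.1) (hbX : b ∈ X.1) (hbY : b ∈ Y.1) (hbS : b ∈ S.1) :
    LazyHomotopic (cliqueGraph G) [P, X, S] [P, Y, S] :=
  ((cliqueGraph_triangle hbX hbY hbS).symm.append_left [P]).trans
    ((cliqueGraph_triangle haP haX haY).append_right [S])

noncomputable def liftTail (G : SimpleGraph V) : V → List V → List (CliqueVert G)
  | _, [] => []
  | u, v :: l => cliqueHull G {u, v} :: cliqueHull G {v} :: liftTail G v l

noncomputable def cliqueLift (G : SimpleGraph V) : List V → List (CliqueVert G)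
  | [] => []
  | v :: l => cliqueHull G {v} :: liftTail G v l

lemma LazyHomotopic.cliqueLift_append_cons {a : V} {m m' : List V}
    (h : LazyHomotopic (cliqueGraph G) (cliqueLift G (a :: m)) (cliqueLift G (a :: m')))
    (l : List V) :
    LazyHomotopic (cliqueGraph G) (cliqueLift G (l ++ a :: m)) (cliqueLift G (l ++ a :: m')) := by
  have tail (u : V) (l : List V) : LazyHomotopic (cliqueGraph G)
      (liftTail G u (l ++ a :: m)) (liftTail G u (l ++ a :: m')) := by
    induction l generalizing u with
    | nil => exact h.append_left [cliqueHull G {u, a}]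
    | cons v l ih => exact (ih v).append_left [cliqueHull G {u, v}, cliqueHull G {v}]
  cases l with
  | nil => exact h
  | cons v l => exact (tail v l).append_left [cliqueHull G {v}]

lemma LazyHomotopic.cliqueLift_triangle {a b c : V} (h₁ : G.Adj a b) (h₂ : G.Adj b c)
    (h₃ : G.Adj a c) (l : List V) :
    LazyHomotopic (cliqueGraph G) (cliqueLift G (a :: b :: c :: l))
      (cliqueLift G (a :: c :: l)) := by
  have hT : G.IsClique {a, b, c} := by
    simp [isClique_insert, h₁, h₂, h₃, h₁.ne, h₂.ne, h₃.ne]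
  have hab : G.IsClique {a, b} := isClique_pair.2 fun _ => h₁
  have hbc : G.IsClique {b, c} := isClique_pair.2 fun _ => h₂
  have hac : G.IsClique {a, c} := isClique_pair.2 fun _ => h₃
  have haT : a ∈ (cliqueHull G {a, b, c}).1 := mem_cliqueHull hT (by simp)
  have hbT : b ∈ (cliqueHull G {a, b, c}).1 := mem_cliqueHull hT (by simp)
  have hcT : c ∈ (cliqueHull G {a, b, c}).1 := mem_cliqueHull hT (by simp)
  have hQa := mem_cliqueHull_singleton (G := G) a
  have hQb := mem_cliqueHull_singleton (G := G) b
  have hQc := mem_cliqueHull_singleton (G := G) c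
  -- replace every edge clique by one clique `T` containing the whole triangle
  have hab_T := (cliqueGraph_swap hQa (mem_cliqueHull hab (by simp)) haT
    (mem_cliqueHull hab (by simp)) hbT hQb).append_right [cliqueHull G {b, c}, cliqueHull G {c}]
  have hbc_T := (cliqueGraph_swap hQb (mem_cliqueHull hbc (by simp)) hbT
    (mem_cliqueHull hbc (by simp)) hcT hQc).append_left [cliqueHull G {a}, cliqueHull G {a, b, c}]
  have hTbT := ((cliqueGraph_deadEnd hbT hQb).append_left [cliqueHull G {a}]).append_right
    [cliqueHull G {c}]
  have hac_T := cliqueGraph_swap hQa (mem_cliqueHull hac (by simp)) haT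
    (mem_cliqueHull hac (by simp)) hcT hQc
  exact ((((hab_T.trans hbc_T).trans hTbT).trans hac_T.symm).append_right (liftTail G c l))

lemma LazyHomotopic.cliqueLift_deadEnd {a b : V} (h : G.Adj a b) (l : List V) :
    LazyHomotopic (cliqueGraph G) (cliqueLift G (a :: b :: a :: l)) (cliqueLift G (a :: l)) := by
  have hab : G.IsClique {a, b} := isClique_pair.2 fun _ => h
  have hQa := mem_cliqueHull_singleton (G := G) a
  have core : LazyHomotopic (cliqueGraph G)
      [cliqueHull G {a}, cliqueHull G {a, b}, cliqueHull G {b}, cliqueHull G {b, a},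
        cliqueHull G {a}] [cliqueHull G {a}] := by
    rw [Set.pair_comm b a]
    have hRbR := cliqueGraph_deadEnd (mem_cliqueHull hab (by simp)) (mem_cliqueHull_singleton b)
    exact ((hRbR.append_left [cliqueHull G {a}]).append_right [cliqueHull G {a}]).trans
      (cliqueGraph_deadEnd hQa (mem_cliqueHull hab (by simp)))
  exact core.append_right (liftTail G a l)

lemma ElemMove.lazyHomotopic_cliqueLift {l l' : List V} (h : ElemMove G l l') :
    LazyHomotopic (cliqueGraph G) (cliqueLift G l) (cliqueLift G l') := by
  cases h with
  | triRemove l₁ l₂ a b c h₁ h₂ h₃ =>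
    exact (LazyHomotopic.cliqueLift_triangle h₁ h₂ h₃ l₂).cliqueLift_append_cons l₁
  | triInsert l₁ l₂ a b c h₁ h₂ h₃ =>
    exact (LazyHomotopic.cliqueLift_triangle h₁ h₂ h₃ l₂).symm.cliqueLift_append_cons l₁
  | deadEndRemove l₁ l₂ a b h =>
    exact (LazyHomotopic.cliqueLift_deadEnd h l₂).cliqueLift_append_cons l₁
  | deadEndInsert l₁ l₂ a b h =>
    exact (LazyHomotopic.cliqueLift_deadEnd h l₂).symm.cliqueLift_append_cons l₁

lemma Homotopic.lazyHomotopic_cliqueLift {l l' : List V} (h : Homotopic G l l') :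
    LazyHomotopic (cliqueGraph G) (cliqueLift G l) (cliqueLift G l') :=
  ReflTransGen.lift' (cliqueLift G) (fun _ _ h => h.lazyHomotopic_cliqueLift) _ _ h

lemma LazyHomotopic.cliqueGraph_detour {A : CliqueVert G} {x z : V} (hx : x ∈ A.1)
    (hz : z ∈ A.1) : LazyHomotopic (cliqueGraph G) [A, cliqueHull G {z}]
      [A, cliqueHull G {x}, cliqueHull G {x, z}, cliqueHull G {z}] := by
  have hxz : G.IsClique {x, z} :=
    A.2.1.subset (Set.insert_subset hx (Set.singleton_subset_iff.2 hz))
  have hRz := cliqueGraph_triangle hz (mem_cliqueHull hxz (by simp)) (mem_cliqueHull_singleton z)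
  have hxR := cliqueGraph_triangle hx (mem_cliqueHull_singleton x) (mem_cliqueHull hxz (by simp))
  exact hRz.symm.trans (hxR.symm.append_right [cliqueHull G {z}])

lemma exists_lazyHomotopic_cliqueLift (l : List (CliqueVert G)) (A : CliqueVert G) {x y : V}
    (hl : (A :: l).IsChain (cliqueGraph G).Adj) (hx : x ∈ A.1)
    (hy : y ∈ ((A :: l).getLast (List.cons_ne_nil A l)).1) :
    ∃ xs, (x :: xs).IsChain G.Adj ∧ (x :: xs).getLast (List.cons_ne_nil x xs) = y ∧
      LazyHomotopic (cliqueGraph G) (A :: l)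
        (A :: cliqueLift G (x :: xs) ++ [(A :: l).getLast (List.cons_ne_nil A l)]) := by
  induction l generalizing A x with
  | nil =>
    have hyQ := mem_cliqueHull_singleton (G := G) y
    by_cases hxy : x = y
    · subst hxy
      exact ⟨[], .singleton x, rfl, (LazyHomotopic.cliqueGraph_deadEnd hy hyQ).symm⟩
    · refine ⟨[y], .cons_cons (A.2.1 hx hy hxy) (.singleton y), rfl, ?_⟩
      exact (LazyHomotopic.cliqueGraph_deadEnd hy hyQ).symm.trans
        ((LazyHomotopic.cliqueGraph_detour hx hy).append_right [A])
  | cons B l ih =>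
    obtain ⟨hAB, hl⟩ := List.isChain_cons_cons.1 hl
    obtain ⟨z, hzA, hzB⟩ := hAB.2
    rw [List.getLast_cons (List.cons_ne_nil B l)] at hy ⊢
    obtain ⟨xs, hxs, hlast, hW⟩ := ih B hl hzB hy
    have hABz : LazyHomotopic (cliqueGraph G) (A :: B :: l)
        ([A, B, cliqueHull G {z}] ++
          (liftTail G z xs ++ [(B :: l).getLast (List.cons_ne_nil B l)])) :=
      hW.append_left [A]
    have hBz := LazyHomotopic.cliqueGraph_triangle hzA hzB (mem_cliqueHull_singleton z)
    by_cases hxz : x = z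
    · subst hxz
      exact ⟨xs, hxs, hlast, hABz.trans (hBz.append_right _)⟩
    · refine ⟨z :: xs, .cons_cons (A.2.1 hx hzA hxz) hxs, by rwa [List.getLast_cons], ?_⟩
      exact hABz.trans ((hBz.trans (LazyHomotopic.cliqueGraph_detour hx hzA)).append_right _)

end CliqueGraph

/-- If `G` is triangularly simply connected, then so is its clique graph `kG`. -/
theorem cliqueGraph_triSimplyConnected {V : Type*} (G : SimpleGraph V)
    (hG : TriSimplyConnected G) : TriSimplyConnected (cliqueGraph G) := by
  classical
  have : Nonempty V := hG.1.nonempty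
  refine ⟨cliqueGraph_connected hG.1, fun C l hl hlast => ?_⟩
  obtain ⟨x, hx⟩ := C.2.nonempty
  obtain ⟨xs, hxs, hxlast, hlift⟩ := exists_lazyHomotopic_cliqueLift l C hl hx (hlast ▸ hx)
  rw [hlast] at hlift
  have hcontract := (hG.2 x xs hxs hxlast).lazyHomotopic_cliqueLift
  have hC : LazyHomotopic (cliqueGraph G) (C :: l) [C] :=
    hlift.trans (((hcontract.append_left [C]).append_right [C]).trans
      (.cliqueGraph_deadEnd hx (mem_cliqueHull_singleton x)))
  simpa [List.destutter_of_isChain _ _ (List.IsChain.imp (fun _ _ h => h.ne) hl)] using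
    hC.homotopic_destutter
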